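/- Let κ : S → PMF S be any kernel such that (i) for every s ∈ W, support(κ s) ⊆ ⋃ {support(P s a) : a ∈ A s and Q*(s,a) = 0}, and (ii) for every s ∉ W, κ s = P s a for some a ∈ A s maximizing Q*(s,·) over A s; let μ^κ_s be the path measure of the Markov chain with transition function κ started at s. Then for every s ∈ S: μ^κ_s(Safe) = μ^κ_s({ω : ∃ t, ω t ∈ W}). -/

import Mathlib

open MeasureTheory Set
open scoped ENNReal Classical

variable {S : Type*}

def IsPathMeasure [MeasurableSpace S] (P : S → PMF S) (μ : S → Measure (ℕ → S)) : Prop :=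
  (∀ s, IsProbabilityMeasure (μ s)) ∧
    ∀ (s : S) (n : ℕ) (x : ℕ → S),
      μ s {ω | ∀ i ≤ n, ω i = x i} =
        (if x 0 = s then 1 else 0) * ∏ i ∈ Finset.range n, (P (x i)) (x (i + 1))

noncomputable def Rw (Acc : Set S) (γacc rn : ℝ) (s : S) : ℝ :=
  if s ∈ Acc then (1 - γacc) * rn else 0

noncomputable def Γw (Acc : Set S) (γacc γ : ℝ) (s : S) : ℝ :=
  if s ∈ Acc then γacc else γ

noncomputable def Ret (Acc : Set S) (γacc γ rn : ℝ) (ω : ℕ → S) : ℝ :=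
  ∑' t : ℕ, Rw Acc γacc rn (ω (t + 1)) * ∏ k ∈ Finset.range t, Γw Acc γacc γ (ω (k + 1))

noncomputable def Val [MeasurableSpace S] (Acc : Set S) (γacc γ rn : ℝ)
    (μ : S → Measure (ℕ → S)) (s : S) : ℝ :=
  ∫ ω, Ret Acc γacc γ rn ω ∂ (μ s)

variable {A : S → Type*}

noncomputable def Valp [MeasurableSpace S] (Acc : Set S) (γacc γ rn : ℝ)
    (μ : ((s : S) → A s) → S → Measure (ℕ → S)) (π : (s : S) → A s) (s : S) : ℝ :=
  ∫ ω, Ret Acc γacc γ rn ω ∂ (μ π s)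

noncomputable def Qp [MeasurableSpace S] [Fintype S]
    (P : (s : S) → A s → PMF S) (Acc : Set S) (γacc γ rn : ℝ)
    (μ : ((s : S) → A s) → S → Measure (ℕ → S)) (π : (s : S) → A s) (s : S) (a : A s) : ℝ :=
  ∑ s' : S, (P s a s').toReal *
    (Rw Acc γacc rn s' + Γw Acc γacc γ s' * Valp Acc γacc γ rn μ π s')

noncomputable def Qstar [MeasurableSpace S] [Fintype S]
    (P : (s : S) → A s → PMF S) (Acc : Set S) (γacc γ rn : ℝ)
    (μ : ((s : S) → A s) → S → Measure (ℕ → S)) (s : S) (a : A s) : ℝ :=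
  ⨆ π : (s' : S) → A s', Qp P Acc γacc γ rn μ π s a

def WinRegion [MeasurableSpace S] (Acc : Set S)
    (μ : ((s : S) → A s) → S → Measure (ℕ → S)) : Set S :=
  {s | ∃ π : (s' : S) → A s', μ π s {ω | ∀ t, ω t ∉ Acc} = 1}

def IsOptimal [MeasurableSpace S] (Acc : Set S) (γacc γ rn : ℝ)
    (μ : ((s : S) → A s) → S → Measure (ℕ → S)) (πo : (s : S) → A s) : Prop :=
  ∀ s, Valp Acc γacc γ rn μ πo s = ⨆ π : (s' : S) → A s', Valp Acc γacc γ rn μ π s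

/-!
Inside the winning region `W` the kernel `κ` only uses actions of optimal value `0`. All rewards
are `≤ 0`, and every visit to `Acc` earns a reward `< 0`. So if a policy `π` attains
`Q*(s, a) = 0`, every successor `s'` of `a` lies outside `Acc` and has `V_π(s') = 0`; the return
of `π` from `s'` then vanishes almost surely, so `π` is safe from `s'` and `s' ∈ W \ Acc`.
Hence `W` is absorbing for `κ`, and so is `Acc`, on which `κ` follows a policy. As `W` and `Acc`
are disjoint, almost no path visits both.

Conversely, let `g u` be the probability of staying forever in `F = (W ∪ Acc)ᶜ`. By the Markov
property `g ≤ κ g`, and `g = 0` off `F`. If `g` were not identically `0`, its maximum set would be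
a `κ`-absorbing subset of `F`. Outside `W` the kernel `κ` is the kernel of a policy, so that policy
would be safe from any point of this set, contradicting `F ∩ W = ∅`. Hence almost every safe path
reaches `W`.
-/

def IsAbsorbing (q : S → PMF S) (F : Set S) : Prop :=
  ∀ u ∈ F, (q u).support ⊆ F

theorem isAbsorbing_setOf_eq_of_le_sum [Fintype S] {q : S → PMF S} {f : S → ℝ≥0∞} {u₀ : S}
    (hf : ∀ u, f u ≤ ∑ v, q u v * f v) (hmax : ∀ u, f u ≤ f u₀) (htop : f u₀ ≠ ∞) :
    IsAbsorbing q {u | f u = f u₀} := by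
  intro u hu v hv
  by_contra hne
  have hlt : f v < f u₀ := (hmax v).lt_of_ne hne
  have hmean : ∑ w, q u w * f w < f u₀ :=
    calc ∑ w, q u w * f w = q u v * f v + ∑ w ∈ Finset.univ.erase v, q u w * f w :=
          (Finset.add_sum_erase _ _ (Finset.mem_univ v)).symm
      _ < q u v * f u₀ + ∑ w ∈ Finset.univ.erase v, q u w * f u₀ :=
          ENNReal.add_lt_add_of_lt_of_le
            (ENNReal.sum_ne_top.2 fun w _ =>
              ENNReal.mul_ne_top (PMF.apply_ne_top _ _) ((hmax w).trans_lt htop.lt_top).ne)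
            (ENNReal.mul_lt_mul_right ((q u).mem_support_iff v |>.1 hv) (PMF.apply_ne_top _ _) hlt)
            (Finset.sum_le_sum fun w _ => mul_le_mul_right (hmax w) _)
      _ = f u₀ := by
          rw [Finset.add_sum_erase _ (fun w => q u w * f u₀) (Finset.mem_univ v),
            ← Finset.sum_mul, show ∑ w, q u w = 1 by simpa using (q u).tsum_coe, one_mul]
  exact (hf u).not_gt (hu ▸ hmean)

section PathMeasure

variable [MeasurableSpace S] [MeasurableSingletonClass S]

theorem MeasureTheory.Measure.ext_of_forall_prefix_eq [Countable S] {ν₁ ν₂ : Measure (ℕ → S)}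
    [IsFiniteMeasure ν₁]
    (h : ∀ n (x : ℕ → S), ν₁ {ω | ∀ i ≤ n, ω i = x i} = ν₂ {ω | ∀ i ≤ n, ω i = x i}) :
    ν₁ = ν₂ := by
  have hmarg : ∀ n, ν₁.map (Preorder.frestrictLe n) = ν₂.map (Preorder.frestrictLe n) := by
    intro n
    refine Measure.ext_of_singleton fun y => ?_
    set x : ℕ → S := Function.extend Subtype.val y fun _ => y ⟨0, by simp⟩
    have hy : Preorder.frestrictLe (π := fun _ => S) n ⁻¹' {y} = {ω | ∀ i ≤ n, ω i = x i} := by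
      ext ω
      simp only [Set.mem_preimage, Set.mem_singleton_iff, Set.mem_ofPred_eq, funext_iff,
        Subtype.forall, Finset.mem_Iic]
      refine forall₂_congr fun i hi => ?_
      rw [show x i = y ⟨i, Finset.mem_Iic.2 hi⟩ from
        Subtype.val_injective.extend_apply y _ ⟨i, Finset.mem_Iic.2 hi⟩]
      rfl
    rw [Measure.map_apply (Preorder.measurable_frestrictLe n) (measurableSet_singleton y),
      Measure.map_apply (Preorder.measurable_frestrictLe n) (measurableSet_singleton y), hy, h]
  have hP := ProbabilityTheory.isProjectiveMeasureFamily_map_restrict (P := ν₁)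
    (X := fun i (ω : ℕ → S) => ω i) fun i => (measurable_pi_apply i).aemeasurable
  exact IsProjectiveLimit.unique (fun I => rfl)
    ((isProjectiveLimit_nat_iff hP ν₂).2 fun n => (hmarg n).symm)

namespace IsPathMeasure

variable {q : S → PMF S} {μ : S → Measure (ℕ → S)}

theorem ae_apply_zero_eq (h : IsPathMeasure q μ) (u : S) : ∀ᵐ ω ∂μ u, ω 0 = u := by
  have := h.1 u
  exact (ae_iff_prob_eq_one (by fun_prop)).2 (by simpa using h.2 u 0 fun _ => u)

variable [Fintype S]

theorem map_shift_eq_sum (h : IsPathMeasure q μ) (u : S) :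
    (μ u).map (fun (ω : ℕ → S) i => ω (i + 1)) = ∑ v, q u v • μ v := by
  have := h.1 u
  refine Measure.ext_of_forall_prefix_eq fun n x => ?_
  set y : ℕ → S := fun i => if i = 0 then u else x (i - 1)
  have hcyl : (fun (ω : ℕ → S) i => ω (i + 1)) ⁻¹' {ω | ∀ i ≤ n, ω i = x i} ∩ {ω | ω 0 = u} =
      {ω | ∀ i ≤ n + 1, ω i = y i} := by
    ext ω
    simp only [Set.mem_inter_iff, Set.mem_preimage, Set.mem_ofPred_eq]
    constructor
    · rintro ⟨hx, h0⟩ (_ | i) hi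
      · simpa [y] using h0
      · simpa [y] using hx i (by omega)
    · intro hy
      exact ⟨fun i hi => by simpa [y] using hy (i + 1) (by omega),
        by simpa [y] using hy 0 (by omega)⟩
  rw [Measure.map_apply (by fun_prop) (by measurability),
    ← measure_inter_conull (h.ae_apply_zero_eq u), hcyl, Measure.coe_finsetSum]
  simp [h.2, Finset.prod_range_succ', y, mul_comm]

theorem measure_preimage_shift (h : IsPathMeasure q μ) (u : S) {E : Set (ℕ → S)}
    (hE : MeasurableSet E) :
    μ u ((fun ω i => ω (i + 1)) ⁻¹' E) = ∑ v, q u v * μ v E := by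
  rw [← Measure.map_apply (by fun_prop) hE, h.map_shift_eq_sum u, Measure.coe_finsetSum]
  simp

theorem measure_exit_eq_zero (h : IsPathMeasure q μ) {F : Set S} (hF : IsAbsorbing q F)
    (k : ℕ) (u : S) : μ u {ω | ω k ∈ F ∧ ω (k + 1) ∉ F} = 0 := by
  induction k generalizing u with
  | zero =>
    by_cases hu : u ∈ F
    · refine measure_mono_null (fun ω hω => hω.2) ?_
      change μ u ((fun ω i => ω (i + 1)) ⁻¹' {ω | ω 0 ∉ F}) = 0
      rw [h.measure_preimage_shift u (by measurability)]
      refine Finset.sum_eq_zero fun v _ => ?_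
      by_cases hv : v ∈ F
      · have : μ v {ω | ω 0 ∉ F} = 0 := measure_eq_zero_iff_ae_notMem.2 <| by
          filter_upwards [h.ae_apply_zero_eq v] with ω h0 hω
          exact hω (h0 ▸ hv)
        rw [this, mul_zero]
      · rw [((q u).apply_eq_zero_iff v).2 fun hmem => hv (hF u hu hmem), zero_mul]
    · refine measure_eq_zero_iff_ae_notMem.2 ?_
      filter_upwards [h.ae_apply_zero_eq u] with ω h0 hω
      exact hu (h0 ▸ hω.1)
  | succ k ih =>
    change μ u ((fun ω i => ω (i + 1)) ⁻¹' {ω | ω k ∈ F ∧ ω (k + 1) ∉ F}) = 0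
    rw [h.measure_preimage_shift u (by measurability)]
    simp [ih]

theorem ae_mem_of_mem_of_le (h : IsPathMeasure q μ) {F : Set S} (hF : IsAbsorbing q F)
    (u : S) : ∀ᵐ ω ∂μ u, ∀ t, ω t ∈ F → ∀ j ≥ t, ω j ∈ F := by
  have hstep : ∀ᵐ ω ∂μ u, ∀ k, ω k ∈ F → ω (k + 1) ∈ F :=
    ae_all_iff.2 fun k => measure_mono_null (fun ω hω => by simpa using hω)
      (h.measure_exit_eq_zero hF k u)
  filter_upwards [hstep] with ω hω t ht j hj
  induction j, hj using Nat.le_induction with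
  | base => exact ht
  | succ j _ ih => exact hω j ih

theorem ae_forall_mem (h : IsPathMeasure q μ) {F : Set S} (hF : IsAbsorbing q F) {u : S}
    (hu : u ∈ F) : ∀ᵐ ω ∂μ u, ∀ t, ω t ∈ F := by
  filter_upwards [h.ae_mem_of_mem_of_le hF u, h.ae_apply_zero_eq u] with ω hω h0 t
  exact hω 0 (h0 ▸ hu) t t.zero_le

theorem exists_isAbsorbing_subset_of_measure_ne_zero (h : IsPathMeasure q μ) {F : Set S}
    {u : S} (hu : μ u {ω | ∀ t, ω t ∈ F} ≠ 0) : ∃ M ⊆ F, M.Nonempty ∧ IsAbsorbing q M := by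
  set g : S → ℝ≥0∞ := fun v => μ v {ω | ∀ t, ω t ∈ F}
  have hstay : {ω : ℕ → S | ∀ t, ω t ∈ F} ⊆
      (fun (ω : ℕ → S) i => ω (i + 1)) ⁻¹' {ω | ∀ t, ω t ∈ F} := fun ω hω t => hω (t + 1)
  have hg_le : ∀ v, g v ≤ ∑ w, q v w * g w := fun v =>
    (measure_mono hstay).trans_eq (h.measure_preimage_shift v (by measurability))
  have hg_out : ∀ v ∉ F, g v = 0 := fun v hv => measure_eq_zero_iff_ae_notMem.2 <| by
    filter_upwards [h.ae_apply_zero_eq v] with ω h0 hω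
    exact hv (h0 ▸ hω 0)
  have : Nonempty S := ⟨u⟩
  obtain ⟨v₀, hv₀⟩ := Finite.exists_max g
  have : IsProbabilityMeasure (μ v₀) := h.1 v₀
  refine ⟨{v | g v = g v₀}, fun v hv => ?_, ⟨v₀, rfl⟩,
    isAbsorbing_setOf_eq_of_le_sum hg_le hv₀ (measure_ne_top _ _)⟩
  by_contra hvF
  exact hu (le_antisymm ((hv₀ u).trans_eq (hv.symm.trans (hg_out v hvF))) zero_le)

end IsPathMeasure

end PathMeasure

section Return

variable (Acc : Set S) {γacc γ rn : ℝ}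

theorem Rw_nonpos (hrn : rn ≤ 0) (hγacc : γacc ≤ 1) (s : S) : Rw Acc γacc rn s ≤ 0 := by
  unfold Rw
  split_ifs
  · exact mul_nonpos_of_nonneg_of_nonpos (by linarith) hrn
  · exact le_rfl

theorem Rw_eq_zero_iff (hrn : rn ≠ 0) (hγacc : γacc ≠ 1) {s : S} :
    Rw Acc γacc rn s = 0 ↔ s ∉ Acc := by
  unfold Rw
  split_ifs with hs <;> simp [hs, hrn, sub_eq_zero, Ne.symm hγacc]

theorem Γw_pos (hγ : 0 < γ) (hγacc : 0 < γacc) (s : S) : 0 < Γw Acc γacc γ s := by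
  unfold Γw
  split_ifs <;> assumption

noncomputable def retTerm (γacc γ rn : ℝ) (ω : ℕ → S) (t : ℕ) : ℝ :=
  Rw Acc γacc rn (ω (t + 1)) * ∏ k ∈ Finset.range t, Γw Acc γacc γ (ω (k + 1))

theorem Ret_eq_tsum_retTerm (ω : ℕ → S) :
    Ret Acc γacc γ rn ω = ∑' t, retTerm Acc γacc γ rn ω t :=
  rfl

theorem retTerm_nonpos (hrn : rn ≤ 0) (hγ : 0 < γ) (hγacc : 0 < γacc ∧ γacc ≤ 1)
    (ω : ℕ → S) (t : ℕ) : retTerm Acc γacc γ rn ω t ≤ 0 :=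
  mul_nonpos_of_nonpos_of_nonneg (Rw_nonpos Acc hrn hγacc.2 _)
    (Finset.prod_nonneg fun _ _ => (Γw_pos Acc hγ hγacc.1 _).le)

theorem abs_retTerm_le (hγ : 0 < γ) (hγacc : 0 < γacc) (ω : ℕ → S) (t : ℕ) :
    |retTerm Acc γacc γ rn ω t| ≤ |(1 - γacc) * rn| * max γ γacc ^ t := by
  have hRw : |Rw Acc γacc rn (ω (t + 1))| ≤ |(1 - γacc) * rn| := by
    unfold Rw
    split_ifs
    · exact le_rfl
    · rw [abs_zero]
      exact abs_nonneg _
  have hΓ : ∀ s, |Γw Acc γacc γ s| ≤ max γ γacc := fun s => by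
    rw [abs_of_pos (Γw_pos Acc hγ hγacc s)]
    unfold Γw
    split_ifs <;> simp
  rw [retTerm, abs_mul, Finset.abs_prod]
  refine mul_le_mul hRw ?_ (by positivity) (abs_nonneg _)
  calc ∏ k ∈ Finset.range t, |Γw Acc γacc γ (ω (k + 1))|
      ≤ ∏ _k ∈ Finset.range t, max γ γacc :=
        Finset.prod_le_prod (fun _ _ => abs_nonneg _) fun _ _ => hΓ _
    _ = max γ γacc ^ t := by rw [Finset.prod_const, Finset.card_range]

theorem summable_abs_retTerm (hγ : 0 < γ ∧ γ < 1) (hγacc : 0 < γacc ∧ γacc < 1)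
    (ω : ℕ → S) : Summable fun t => |retTerm Acc γacc γ rn ω t| :=
  ((summable_geometric_of_lt_one (hγ.1.le.trans (le_max_left _ _))
    (max_lt hγ.2 hγacc.2)).mul_left _).of_nonneg_of_le (fun _ => abs_nonneg _)
    (abs_retTerm_le Acc hγ.1 hγacc.1 ω)

theorem abs_Ret_le (hγ : 0 < γ ∧ γ < 1) (hγacc : 0 < γacc ∧ γacc < 1) (ω : ℕ → S) :
    |Ret Acc γacc γ rn ω| ≤ |(1 - γacc) * rn| * (1 - max γ γacc)⁻¹ := by
  have hr₀ : 0 ≤ max γ γacc := hγ.1.le.trans (le_max_left _ _)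
  have hr₁ : max γ γacc < 1 := max_lt hγ.2 hγacc.2
  calc |Ret Acc γacc γ rn ω| ≤ ∑' t, |retTerm Acc γacc γ rn ω t| := by
        simpa only [Real.norm_eq_abs, ← Ret_eq_tsum_retTerm] using
          norm_tsum_le_tsum_norm (f := retTerm Acc γacc γ rn ω)
            (summable_abs_retTerm Acc hγ hγacc ω)
    _ ≤ ∑' t : ℕ, |(1 - γacc) * rn| * max γ γacc ^ t :=
        (summable_abs_retTerm Acc hγ hγacc ω).tsum_le_tsum (abs_retTerm_le Acc hγ.1 hγacc.1 ω)
          ((summable_geometric_of_lt_one hr₀ hr₁).mul_left _)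
    _ = |(1 - γacc) * rn| * (1 - max γ γacc)⁻¹ := by
        rw [tsum_mul_left, tsum_geometric_of_lt_one hr₀ hr₁]

theorem Ret_nonpos (hrn : rn ≤ 0) (hγ : 0 < γ) (hγacc : 0 < γacc ∧ γacc ≤ 1) (ω : ℕ → S) :
    Ret Acc γacc γ rn ω ≤ 0 :=
  tsum_nonpos (retTerm_nonpos Acc hrn hγ hγacc ω)

theorem notMem_of_Ret_eq_zero (hrn : rn < 0) (hγ : 0 < γ ∧ γ < 1)
    (hγacc : 0 < γacc ∧ γacc < 1) {ω : ℕ → S} (h : Ret Acc γacc γ rn ω = 0) (t : ℕ) :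
    ω (t + 1) ∉ Acc := by
  have hsum : HasSum (fun t => -retTerm Acc γacc γ rn ω t) (-Ret Acc γacc γ rn ω) :=
    (summable_abs_retTerm Acc hγ hγacc ω).of_abs.hasSum.neg
  rw [h, neg_zero] at hsum
  have hterm : retTerm Acc γacc γ rn ω t = 0 := by
    simpa using congrFun ((hasSum_zero_iff_of_nonneg fun t =>
      neg_nonneg.2 (retTerm_nonpos Acc hrn.le hγ.1 ⟨hγacc.1, hγacc.2.le⟩ ω t)).1 hsum) t
  have hprod : ∏ k ∈ Finset.range t, Γw Acc γacc γ (ω (k + 1)) ≠ 0 :=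
    (Finset.prod_pos fun k _ => Γw_pos Acc hγ.1 hγacc.1 _).ne'
  exact (Rw_eq_zero_iff Acc hrn.ne hγacc.2.ne).1 ((mul_eq_zero.1 hterm).resolve_right hprod)

variable [MeasurableSpace S] [Countable S] [MeasurableSingletonClass S]

theorem measurable_Ret : Measurable (Ret Acc γacc γ rn : (ℕ → S) → ℝ) :=
  Measurable.tsum fun _ => by fun_prop

theorem integrable_Ret (hγ : 0 < γ ∧ γ < 1) (hγacc : 0 < γacc ∧ γacc < 1)
    (ν : Measure (ℕ → S)) [IsFiniteMeasure ν] : Integrable (Ret Acc γacc γ rn) ν :=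
  Integrable.of_bound (measurable_Ret Acc).aestronglyMeasurable _
    (ae_of_all _ fun ω => abs_Ret_le Acc hγ hγacc ω)

theorem IsPathMeasure.measure_safe_eq_one_of_integral_Ret_eq_zero {q : S → PMF S}
    {ν : S → Measure (ℕ → S)} (hν : IsPathMeasure q ν) (hrn : rn < 0)
    (hγ : 0 < γ ∧ γ < 1) (hγacc : 0 < γacc ∧ γacc < 1) {s : S} (hs : s ∉ Acc)
    (h : ∫ ω, Ret Acc γacc γ rn ω ∂ν s = 0) : ν s {ω | ∀ t, ω t ∉ Acc} = 1 := by
  have := hν.1 s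
  have hRet : ∀ᵐ ω ∂ν s, Ret Acc γacc γ rn ω = 0 := by
    have hneg := (integral_eq_zero_iff_of_nonneg_ae
      (ae_of_all _ fun ω => neg_nonneg.2 (Ret_nonpos Acc hrn.le hγ.1 ⟨hγacc.1, hγacc.2.le⟩ ω))
      (integrable_Ret Acc hγ hγacc (ν s)).neg).1 (by rw [integral_neg, h, neg_zero])
    filter_upwards [hneg] with ω hω using neg_eq_zero.1 hω
  refine (mem_ae_iff_prob_eq_one (by measurability)).1 ?_
  filter_upwards [hRet, hν.ae_apply_zero_eq s] with ω hω h0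
  rintro (_ | t)
  · exact h0 ▸ hs
  · exact notMem_of_Ret_eq_zero Acc hrn hγ hγacc hω t

end Return

section WinRegion

variable [MeasurableSpace S] [MeasurableSingletonClass S] {Acc : Set S}
  {P : (s : S) → A s → PMF S} {μ : ((s : S) → A s) → S → Measure (ℕ → S)}

theorem notMem_of_mem_winRegion
    (hμ : ∀ π : (s : S) → A s, IsPathMeasure (fun s => P s (π s)) (μ π))
    {u : S} (hu : u ∈ WinRegion Acc μ) : u ∉ Acc := by
  obtain ⟨π, hπ⟩ := hu
  intro huAcc
  have hnull : μ π u {ω | ∀ t, ω t ∉ Acc} = 0 := measure_eq_zero_iff_ae_notMem.2 <| by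
    filter_upwards [(hμ π).ae_apply_zero_eq u] with ω h0 hω
    exact hω 0 (h0 ▸ huAcc)
  exact one_ne_zero (hπ.symm.trans hnull)

variable [Fintype S]

theorem support_subset_of_Qstar_eq_zero [∀ s, Fintype (A s)] [∀ s, Nonempty (A s)]
    (hμ : ∀ π : (s : S) → A s, IsPathMeasure (fun s => P s (π s)) (μ π)) {γacc γ rn : ℝ}
    (hrn : rn < 0) (hγ : 0 < γ ∧ γ < 1) (hγacc : 0 < γacc ∧ γacc < 1) {s : S} {a : A s}
    (hQ : Qstar P Acc γacc γ rn μ s a = 0) : (P s a).support ⊆ WinRegion Acc μ \ Acc := by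
  obtain ⟨π, hπ⟩ := exists_eq_ciSup_of_finite (f := fun π => Qp P Acc γacc γ rn μ π s a)
  have hRw : ∀ s', Rw Acc γacc rn s' ≤ 0 := Rw_nonpos Acc hrn.le hγacc.2.le
  have hΓV : ∀ s', Γw Acc γacc γ s' * Valp Acc γacc γ rn μ π s' ≤ 0 := fun s' =>
    mul_nonpos_of_nonneg_of_nonpos (Γw_pos Acc hγ.1 hγacc.1 s').le
      (integral_nonpos fun ω => Ret_nonpos Acc hrn.le hγ.1 ⟨hγacc.1, hγacc.2.le⟩ ω)
  have hterms := (Finset.sum_eq_zero_iff_of_nonpos fun s' _ =>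
    mul_nonpos_of_nonneg_of_nonpos ENNReal.toReal_nonneg (add_nonpos (hRw s') (hΓV s'))).1
    (hπ.trans hQ)
  intro s' hs'
  have hP : (P s a s').toReal ≠ 0 :=
    ENNReal.toReal_ne_zero.2 ⟨(P s a).mem_support_iff s' |>.1 hs', PMF.apply_ne_top _ _⟩
  have hsum := (mul_eq_zero.1 (hterms s' (Finset.mem_univ _))).resolve_left hP
  have hRw0 : Rw Acc γacc rn s' = 0 := by linarith [hRw s', hΓV s']
  have hΓV0 : Γw Acc γacc γ s' * Valp Acc γacc γ rn μ π s' = 0 := by linarith [hRw s', hΓV s']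
  have hs'Acc : s' ∉ Acc := (Rw_eq_zero_iff Acc hrn.ne hγacc.2.ne).1 hRw0
  have hV : Valp Acc γacc γ rn μ π s' = 0 :=
    (mul_eq_zero.1 hΓV0).resolve_left (Γw_pos Acc hγ.1 hγacc.1 s').ne'
  exact ⟨⟨π, (hμ π).measure_safe_eq_one_of_integral_Ret_eq_zero Acc hrn hγ hγacc hs'Acc hV⟩,
    hs'Acc⟩

theorem measure_forall_notMem_winRegion_eq_zero [∀ s, Nonempty (A s)]
    (hμ : ∀ π : (s : S) → A s, IsPathMeasure (fun s => P s (π s)) (μ π))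
    {κ : S → PMF S} {μκ : S → Measure (ℕ → S)} (hμκ : IsPathMeasure κ μκ)
    (hκ : ∀ u ∉ WinRegion Acc μ, ∃ a, κ u = P u a) (u : S) :
    μκ u {ω | ∀ t, ω t ∉ WinRegion Acc μ ∧ ω t ∉ Acc} = 0 := by
  by_contra hne
  obtain ⟨M, hMF, ⟨u₀, hu₀⟩, hM⟩ :=
    hμκ.exists_isAbsorbing_subset_of_measure_ne_zero (F := {v | v ∉ WinRegion Acc μ ∧ v ∉ Acc}) hne
  have hMW : ∀ v ∈ M, v ∉ WinRegion Acc μ := fun v hv => (hMF hv).1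
  let π : (v : S) → A v := fun v =>
    if hv : v ∈ WinRegion Acc μ then Classical.arbitrary _ else (hκ v hv).choose
  have hπM : IsAbsorbing (fun v => P v (π v)) M := fun v hv => by
    have hπv : P v (π v) = κ v := by
      simp only [π, dif_neg (hMW v hv)]
      exact (hκ v (hMW v hv)).choose_spec.symm
    simpa only [hπv] using hM v hv
  have := (hμ π).1 u₀
  refine hMW u₀ hu₀ ⟨π, (mem_ae_iff_prob_eq_one (by measurability)).1 ?_⟩
  filter_upwards [(hμ π).ae_forall_mem hπM hu₀] with ω hω t using (hMF (hω t)).2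

end WinRegion

theorem forall_notMem_iff_exists_mem {W B : Set S} (hWB : Disjoint W B) {ω : ℕ → S}
    (hW : ∀ t, ω t ∈ W → ∀ j ≥ t, ω j ∈ W) (hB : ∀ t, ω t ∈ B → ∀ j ≥ t, ω j ∈ B)
    (hleave : ¬∀ t, ω t ∉ W ∧ ω t ∉ B) : (∀ t, ω t ∉ B) ↔ ∃ t, ω t ∈ W := by
  constructor
  · intro hsafe
    by_contra hreach
    exact hleave fun t => ⟨fun hW => hreach ⟨t, hW⟩, hsafe t⟩
  · rintro ⟨t, ht⟩ j hj
    rcases le_total t j with htj | hjt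
    · exact Set.disjoint_left.1 hWB (hW t ht j htj) hj
    · exact Set.disjoint_left.1 hWB ht (hB j hj t hjt)

theorem supervisor_kernel_safety_eq_reach_winning_region_general
    [Fintype S] [MeasurableSpace S] [MeasurableSingletonClass S]
    [∀ s, Fintype (A s)] [∀ s, Nonempty (A s)]
    (P : (s : S) → A s → PMF S) (Acc : Set S)
    (habs : ∀ s ∈ Acc, ∀ a : A s, (P s a).support ⊆ Acc)
    (μ : ((s : S) → A s) → S → Measure (ℕ → S))
    (hμ : ∀ π : (s : S) → A s, IsPathMeasure (fun s => P s (π s)) (μ π))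
    (rn γ γacc : ℝ) (hrn : rn < 0) (hγ : 0 < γ ∧ γ < 1) (hγacc : 0 < γacc ∧ γacc < 1)
    (κ : S → PMF S) (μκ : S → Measure (ℕ → S)) (hμκ : IsPathMeasure κ μκ)
    (hi : ∀ s ∈ WinRegion Acc μ, (κ s).support ⊆
        ⋃ a ∈ {a : A s | Qstar P Acc γacc γ rn μ s a = 0}, (P s a).support)
    (hii : ∀ s ∉ WinRegion Acc μ, ∃ a : A s,
        (∀ a' : A s, Qstar P Acc γacc γ rn μ s a' ≤ Qstar P Acc γacc γ rn μ s a) ∧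
          κ s = P s a) :
    ∀ s : S, μκ s {ω | ∀ t, ω t ∉ Acc} =
      μκ s {ω | ∃ t, ω t ∈ WinRegion Acc μ} := by
  intro s
  have hWAcc : Disjoint (WinRegion Acc μ) Acc :=
    Set.disjoint_left.2 fun u hu => notMem_of_mem_winRegion hμ hu
  have hκW : IsAbsorbing κ (WinRegion Acc μ) := fun u hu v hv => by
    obtain ⟨a, ha, hva⟩ : ∃ a, Qstar P Acc γacc γ rn μ u a = 0 ∧ v ∈ (P u a).support := by
      simpa using hi u hu hv
    exact (support_subset_of_Qstar_eq_zero hμ hrn hγ hγacc ha hva).1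
  have hκAcc : IsAbsorbing κ Acc := fun u hu => by
    obtain ⟨a, -, hκu⟩ := hii u fun hW => Set.disjoint_left.1 hWAcc hW hu
    exact hκu ▸ habs u hu a
  have hleave := measure_forall_notMem_winRegion_eq_zero hμ hμκ
    (fun u hu => (hii u hu).imp fun _ => And.right) s
  refine measure_congr (Filter.eventuallyEq_set.2 ?_)
  filter_upwards [hμκ.ae_mem_of_mem_of_le hκW s, hμκ.ae_mem_of_mem_of_le hκAcc s,
    measure_eq_zero_iff_ae_notMem.1 hleave] with ω hW hAcc hleave
  exact forall_notMem_iff_exists_mem hWAcc hW hAcc hleave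

/-- for the kernel induced by the permissive supervisor (enabling exactly
the actions of optimal value 0 inside the winning region and an optimal action outside),
the probability of safety equals the probability of reaching the winning region. -/
theorem supervisor_kernel_safety_eq_reach_winning_region
    [Fintype S] [Nonempty S] [MeasurableSpace S] [MeasurableSingletonClass S]
    [∀ s, Fintype (A s)] [∀ s, Nonempty (A s)]
    (P : (s : S) → A s → PMF S) (Acc : Set S)
    (habs : ∀ s ∈ Acc, ∀ a : A s, (P s a).support ⊆ Acc)
    (μ : ((s : S) → A s) → S → Measure (ℕ → S))
    (hμ : ∀ π : (s : S) → A s, IsPathMeasure (fun s => P s (π s)) (μ π))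
    (rn γ γacc : ℝ) (hrn : rn < 0) (hγ : 0 < γ ∧ γ < 1) (hγacc : 0 < γacc ∧ γacc < 1)
    (κ : S → PMF S) (μκ : S → Measure (ℕ → S)) (hμκ : IsPathMeasure κ μκ)
    (hi : ∀ s ∈ WinRegion Acc μ, (κ s).support ⊆
        ⋃ a ∈ {a : A s | Qstar P Acc γacc γ rn μ s a = 0}, (P s a).support)
    (hii : ∀ s ∉ WinRegion Acc μ, ∃ a : A s,
        (∀ a' : A s, Qstar P Acc γacc γ rn μ s a' ≤ Qstar P Acc γacc γ rn μ s a) ∧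
          κ s = P s a) :
    ∀ s : S, μκ s {ω | ∀ t, ω t ∉ Acc} =
      μκ s {ω | ∃ t, ω t ∈ WinRegion Acc μ} :=
  supervisor_kernel_safety_eq_reach_winning_region_general P Acc habs μ hμ rn γ γacc hrn hγ hγacc κ
    μκ hμκ hi hii
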